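/- Best-case inner and middle problem (Proposition 2.1): Let s₁, …, s_N ∈ ℝⁿ with empirical measure Q_N, sample mean s̄ and empirical covariance Σ. Let φ ∈ ℝⁿ with φ ≠ 0, let δ > 0, let α₀ ∈ ℝ, put μ̄ = φ·s̄ and assume μ̄ ≥ α₀. Then the minimum over all α ≥ α₀ with (α − μ̄)² ≤ δ·‖φ‖₂² of the quantity inf{ E^Q[(φ·S)²] − α² : Q ∈ U_δ(Q_N), E^Q[φ·S] = α } equals max(√(φᵀΣφ) − √δ·‖φ‖₂, 0)², and the outer minimum is attained at α* = μ̄. -/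

import Mathlib

open MeasureTheory
open scoped ENNReal BigOperators

/-- Euclidean dot product on `Fin n → ℝ`. -/
noncomputable def eDot {n : ℕ} (a b : Fin n → ℝ) : ℝ := ∑ i, a i * b i

/-- Transport cost of a coupling `π` for the quadratic cost `c(u,v) = ‖u − v‖₂²`. -/
noncomputable def transportCost {n : ℕ}
    (π : Measure ((Fin n → ℝ) × (Fin n → ℝ))) : ℝ≥0∞ :=
  ∫⁻ p, ENNReal.ofReal (∑ i, (p.1 i - p.2 i) ^ 2) ∂π

/-- Optimal transport cost `D_c(Q, Q')` with quadratic cost `c(u,v) = ‖u − v‖₂²`. -/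
noncomputable def otCost {n : ℕ} (Q Q' : Measure (Fin n → ℝ)) : ℝ≥0∞ :=
  sInf { r | ∃ π : Measure ((Fin n → ℝ) × (Fin n → ℝ)),
      IsProbabilityMeasure π ∧ π.map Prod.fst = Q ∧ π.map Prod.snd = Q' ∧
      r = transportCost π }

/-- Empirical measure `Q_N = (1/N)·Σᵢ δ_{sᵢ}` of the sample points `s₁, …, s_N`. -/
noncomputable def empiricalMeasure {n N : ℕ} (s : Fin N → (Fin n → ℝ)) :
    Measure (Fin n → ℝ) :=
  (N : ℝ≥0∞)⁻¹ • ∑ i, Measure.dirac (s i)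


/-- Optimal value of the best-case inner problem:
`inf{ E^Q[(φ·S)²] − α² : Q ∈ U_δ(Q_N), E^Q[φ·S] = α }`. -/
noncomputable def innerBest {n N : ℕ} (s : Fin N → (Fin n → ℝ))
    (φ : Fin n → ℝ) (δ α : ℝ) : ℝ :=
  sInf { v | ∃ Q : Measure (Fin n → ℝ), IsProbabilityMeasure Q ∧
      otCost Q (empiricalMeasure s) ≤ ENNReal.ofReal δ ∧
      Integrable (fun x => eDot φ x) Q ∧ Integrable (fun x => (eDot φ x) ^ 2) Q ∧
      (∫ x, eDot φ x ∂Q) = α ∧ v = (∫ x, (eDot φ x) ^ 2 ∂Q) - α ^ 2 }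

/-!
Write `X = φ·S`. Along a coupling of `Q` with `Q_N`, `X` moves by at most `‖φ‖₂‖x − y‖₂`, so a
coupling of cost at most `δ` perturbs `X` by a random variable of second moment at most
`δ‖φ‖₂²`. The standard deviation `√Var` satisfies the triangle inequality (Cauchy–Schwarz for the
covariance), hence `√(φᵀΣφ) ≤ √Var_Q[X] + √δ‖φ‖₂` for every `Q ∈ U_δ(Q_N)`, whatever its mean.

Conversely, moving each point `x` along `φ` by `(a + c (φ·x − μ̄)) / ‖φ‖₂²` shifts the mean of `X`
by `a`, multiplies its deviations by `1 + c` and costs `(a² + c² φᵀΣφ) / ‖φ‖₂²`. With `c = 0` this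
shows that every admissible `α` is feasible; with `a = 0` and the largest admissible shrinking
`c ∈ [-1, 0]` it attains the lower bound at `α = μ̄`.
-/

namespace ProbabilityTheory

variable {Ω : Type*} {mΩ : MeasurableSpace Ω} {μ : Measure Ω} {X Y : Ω → ℝ}

section Finite

variable [IsFiniteMeasure μ]

lemma covariance_sq_le_variance_mul_variance (hX : MemLp X 2 μ) (hY : MemLp Y 2 μ) :
    cov[X, Y; μ] ^ 2 ≤ Var[X; μ] * Var[Y; μ] := by
  have h := discrim_le_zero (a := Var[Y; μ]) (b := 2 * cov[X, Y; μ]) (c := Var[X; μ]) fun t => by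
    have := variance_nonneg (X + t • Y) μ
    rw [variance_add hX (hY.const_smul t), covariance_smul_right, variance_smul] at this
    linarith
  rw [discrim] at h
  linarith

lemma memLp_two_const_add_mul_sub (hX : MemLp X 2 μ) (b k m : ℝ) :
    MemLp (fun ω => b + k * (X ω - m)) 2 μ :=
  (memLp_const b).add ((hX.sub (memLp_const m)).const_mul k)

lemma sqrt_variance_add_le (hX : MemLp X 2 μ) (hY : MemLp Y 2 μ) :
    √Var[X + Y; μ] ≤ √Var[X; μ] + √Var[Y; μ] := by
  have hcov : cov[X, Y; μ] ≤ √Var[X; μ] * √Var[Y; μ] := by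
    rw [← Real.sqrt_mul (variance_nonneg X μ)]
    exact (le_abs_self _).trans (Real.abs_le_sqrt (covariance_sq_le_variance_mul_variance hX hY))
  rw [Real.sqrt_le_left (by positivity), variance_add hX hY, add_sq,
    Real.sq_sqrt (variance_nonneg X μ), Real.sq_sqrt (variance_nonneg Y μ)]
  linarith

end Finite

section Probability

variable [IsProbabilityMeasure μ]

lemma integral_const_add_mul_sub_integral (hX : Integrable X μ) (b k : ℝ) :
    μ[fun ω => b + k * (X ω - μ[X])] = b := by
  have hi : Integrable (fun ω => k * (X ω - μ[X])) μ := (hX.sub (integrable_const _)).const_mul k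
  simp only [integral_add (integrable_const b) hi, integral_const_mul,
    integral_sub hX (integrable_const _)]
  simp

lemma variance_const_add_mul_sub (hX : AEStronglyMeasurable X μ) (b k m : ℝ) :
    Var[fun ω => b + k * (X ω - m); μ] = k ^ 2 * Var[X; μ] := by
  rw [variance_const_add (by fun_prop), variance_const_mul, variance_sub_const hX]

lemma integral_sq_sub_sq_eq_variance (hX : AEStronglyMeasurable X μ)
    (hX2 : Integrable (fun ω => X ω ^ 2) μ) :
    ∫ ω, X ω ^ 2 ∂μ - (∫ ω, X ω ∂μ) ^ 2 = Var[X; μ] :=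
  (variance_eq_sub ((memLp_two_iff_integrable_sq hX).2 hX2)).symm

end Probability

end ProbabilityTheory

section Real

lemma sq_max_sub_le {V W d : ℝ} (hW : 0 ≤ W) (h : √V ≤ √W + d) : max (√V - d) 0 ^ 2 ≤ W := by
  calc max (√V - d) 0 ^ 2 ≤ √W ^ 2 :=
        pow_le_pow_left₀ (le_max_right _ _) (max_le (by linarith) (Real.sqrt_nonneg W)) 2
    _ = W := Real.sq_sqrt hW

lemma exists_sq_mul_le_sq_and_eq {V d : ℝ} (hV : 0 ≤ V) (hd : 0 ≤ d) :
    ∃ c : ℝ, c ^ 2 * V ≤ d ^ 2 ∧ (1 + c) ^ 2 * V = max (√V - d) 0 ^ 2 := by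
  rcases le_or_gt √V d with hle | hlt
  · exact ⟨-1, by simpa using (Real.sqrt_le_left hd).1 hle,
      by simp [max_eq_right (sub_nonpos.2 hle)]⟩
  · have hsV : 0 < √V := hd.trans_lt hlt
    have hV' : √V ^ 2 = V := Real.sq_sqrt hV
    refine ⟨-d / √V, le_of_eq ?_, ?_⟩
    · field_simp
      rw [hV']
    · rw [max_eq_left (by linarith)]
      field_simp
      rw [hV']
      ring

end Real

open ProbabilityTheory

section Empirical

variable {n N : ℕ} (s : Fin N → Fin n → ℝ)

lemma isProbabilityMeasure_empiricalMeasure (hN : 0 < N) :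
    IsProbabilityMeasure (empiricalMeasure s) := by
  constructor
  simp [empiricalMeasure, ENNReal.inv_mul_cancel, hN.ne']

lemma integral_empiricalMeasure (f : (Fin n → ℝ) → ℝ) :
    ∫ x, f x ∂empiricalMeasure s = (N : ℝ)⁻¹ * ∑ i, f (s i) := by
  rw [empiricalMeasure, integral_smul_measure, integral_finsetSum_measure
    fun i _ => integrable_dirac (by simp)]
  simp [integral_dirac]

lemma memLp_two_empiricalMeasure (hN : 0 < N) {f : (Fin n → ℝ) → ℝ} (hf : Measurable f) :
    MemLp f 2 (empiricalMeasure s) := by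
  rw [memLp_two_iff_integrable_sq hf.aestronglyMeasurable, empiricalMeasure]
  exact (integrable_finsetSum_measure.2 fun i _ => integrable_dirac (by simp)).smul_measure
    (by simp [hN.ne'])

end Empirical

section Dot

variable {n : ℕ} (φ : Fin n → ℝ)

@[fun_prop]
lemma continuous_eDot : Continuous (eDot φ) := by
  unfold eDot; fun_prop

@[fun_prop]
lemma measurable_eDot : Measurable (eDot φ) := (continuous_eDot φ).measurable

lemma eDot_add_smul (x : Fin n → ℝ) (t : ℝ) :
    eDot φ (x + t • φ) = eDot φ x + t * ∑ j, φ j ^ 2 := by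
  simp only [eDot, Pi.add_apply, Pi.smul_apply, smul_eq_mul, mul_add, Finset.sum_add_distrib,
    Finset.mul_sum]
  congr 1
  exact Finset.sum_congr rfl fun j _ => by ring

lemma sq_eDot_sub_le (x y : Fin n → ℝ) :
    (eDot φ x - eDot φ y) ^ 2 ≤ (∑ j, φ j ^ 2) * ∑ j, (x j - y j) ^ 2 := by
  have h : eDot φ x - eDot φ y = ∑ j, φ j * (x j - y j) := by
    simp only [eDot, mul_sub, Finset.sum_sub_distrib]
  rw [h]
  exact Finset.sum_mul_sq_le_sq_mul_sq _ _ _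

lemma lintegral_sq_eDot_sub_le (π : Measure ((Fin n → ℝ) × (Fin n → ℝ))) :
    ∫⁻ p, ENNReal.ofReal ((eDot φ p.1 - eDot φ p.2) ^ 2) ∂π
      ≤ ENNReal.ofReal (∑ j, φ j ^ 2) * transportCost π := by
  rw [transportCost, ← lintegral_const_mul' _ _ ENNReal.ofReal_ne_top]
  refine lintegral_mono fun p => ?_
  rw [← ENNReal.ofReal_mul (by positivity)]
  exact ENNReal.ofReal_le_ofReal (sq_eDot_sub_le φ p.1 p.2)

end Dot

section Transport

variable {n : ℕ}

lemma otCost_le_transportCost {Q Q' : Measure (Fin n → ℝ)}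
    {π : Measure ((Fin n → ℝ) × (Fin n → ℝ))} [IsProbabilityMeasure π]
    (hfst : π.map Prod.fst = Q) (hsnd : π.map Prod.snd = Q') :
    otCost Q Q' ≤ transportCost π :=
  sInf_le ⟨π, inferInstance, hfst, hsnd, rfl⟩

variable (φ : Fin n → ℝ)

lemma sqrt_variance_le_of_transportCost_le {Q Q' : Measure (Fin n → ℝ)}
    {π : Measure ((Fin n → ℝ) × (Fin n → ℝ))} [IsProbabilityMeasure π]
    (hfst : π.map Prod.fst = Q) (hsnd : π.map Prod.snd = Q')
    (hQ : MemLp (eDot φ) 2 Q) (hQ' : MemLp (eDot φ) 2 Q') {c : ℝ} (hc : 0 ≤ c)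
    (hcost : transportCost π ≤ ENNReal.ofReal c) :
    √Var[eDot φ; Q'] ≤ √Var[eDot φ; Q] + √(c * ∑ j, φ j ^ 2) := by
  set f := eDot φ ∘ Prod.fst
  set g := eDot φ ∘ Prod.snd
  have hf : MemLp f 2 π :=
    (memLp_map_measure_iff (by fun_prop) measurable_fst.aemeasurable).1 (hfst ▸ hQ)
  have hg : MemLp g 2 π :=
    (memLp_map_measure_iff (by fun_prop) measurable_snd.aemeasurable).1 (hsnd ▸ hQ')
  have hVarQ : Var[eDot φ; Q] = Var[f; π] := by
    rw [← hfst, variance_map (by fun_prop) (by fun_prop)]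
  have hVarQ' : Var[eDot φ; Q'] = Var[g; π] := by
    rw [← hsnd, variance_map (by fun_prop) (by fun_prop)]
  have hsq : (g - f) ^ 2 = fun p => (eDot φ p.1 - eDot φ p.2) ^ 2 := by
    funext p; simp only [Pi.pow_apply, Pi.sub_apply, Function.comp_apply, g, f]; ring
  have hmoment : π[(g - f) ^ 2] ≤ c * ∑ j, φ j ^ 2 := by
    have hint : Integrable (fun p => (eDot φ p.1 - eDot φ p.2) ^ 2) π := (hf.sub hg).integrable_sq
    rw [← ENNReal.ofReal_le_ofReal_iff (by positivity), hsq, ofReal_integral_eq_lintegral_ofReal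
      hint (ae_of_all _ fun p => sq_nonneg _), mul_comm, ENNReal.ofReal_mul (by positivity)]
    exact (lintegral_sq_eDot_sub_le φ π).trans (mul_le_mul_right hcost _)
  calc √Var[eDot φ; Q'] = √Var[f + (g - f); π] := by rw [hVarQ', add_sub_cancel]
    _ ≤ √Var[f; π] + √Var[g - f; π] := sqrt_variance_add_le hf (hg.sub hf)
    _ ≤ √Var[eDot φ; Q] + √(c * ∑ j, φ j ^ 2) := by
      rw [hVarQ]
      gcongr
      exact (variance_le_expectation_sq (hg.sub hf).1).trans hmoment

open Filter Topology in
lemma sqrt_variance_le_of_otCost_le {Q Q' : Measure (Fin n → ℝ)}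
    (hQ : MemLp (eDot φ) 2 Q) (hQ' : MemLp (eDot φ) 2 Q') {δ : ℝ} (hδ : 0 ≤ δ)
    (hot : otCost Q Q' ≤ ENNReal.ofReal δ) :
    √Var[eDot φ; Q'] ≤ √Var[eDot φ; Q] + √δ * √(∑ j, φ j ^ 2) := by
  have hbound : ∀ ε > 0, √Var[eDot φ; Q'] ≤ √Var[eDot φ; Q] + √((δ + ε) * ∑ j, φ j ^ 2) := by
    intro ε hε
    have hlt : otCost Q Q' < ENNReal.ofReal (δ + ε) :=
      hot.trans_lt ((ENNReal.ofReal_lt_ofReal_iff (by positivity)).2 (by linarith))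
    obtain ⟨_, ⟨π, hπ, hfst, hsnd, rfl⟩, hcost⟩ := sInf_lt_iff.1 hlt
    exact sqrt_variance_le_of_transportCost_le φ hfst hsnd hQ hQ' (by positivity) hcost.le
  have hlim : Tendsto (fun ε => √Var[eDot φ; Q] + √((δ + ε) * ∑ j, φ j ^ 2)) (𝓝[>] 0)
      (𝓝 (√Var[eDot φ; Q] + √((δ + 0) * ∑ j, φ j ^ 2))) :=
    ((Continuous.tendsto (by fun_prop) 0).mono_left nhdsWithin_le_nhds)
  rw [add_zero, Real.sqrt_mul hδ] at hlim
  exact ge_of_tendsto hlim (eventually_nhdsWithin_of_forall hbound)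

variable {φ}

lemma exists_otCost_le_mean_variance (hφ : φ ≠ 0) {P : Measure (Fin n → ℝ)}
    [IsProbabilityMeasure P] (hP : MemLp (eDot φ) 2 P) {δ a c : ℝ}
    (hac : a ^ 2 + c ^ 2 * Var[eDot φ; P] ≤ δ * ∑ j, φ j ^ 2) :
    ∃ Q : Measure (Fin n → ℝ), IsProbabilityMeasure Q ∧ otCost Q P ≤ ENNReal.ofReal δ ∧
      MemLp (eDot φ) 2 Q ∧ Q[eDot φ] = P[eDot φ] + a ∧
      Var[eDot φ; Q] = (1 + c) ^ 2 * Var[eDot φ; P] := by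
  set m := P[eDot φ]
  set nsq := ∑ j, φ j ^ 2
  have hnsq : 0 < nsq := by
    obtain ⟨j, hj⟩ := Function.ne_iff.1 hφ
    exact Finset.sum_pos' (fun i _ => sq_nonneg _) ⟨j, Finset.mem_univ j, sq_pos_of_ne_zero hj⟩
  set Y := fun x => a + c * (eDot φ x - m)
  set T := fun x => x + (Y x / nsq) • φ
  have hT : Measurable T := by fun_prop
  have hXT : eDot φ ∘ T = fun x => (m + a) + (1 + c) * (eDot φ x - m) := by
    funext x
    simp only [Function.comp_apply, T, eDot_add_smul, Y]
    field_simp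
    ring
  have hcost : ∀ x, ∑ j, (T x j - x j) ^ 2 = Y x ^ 2 / nsq := by
    intro x
    simp only [T, Pi.add_apply, Pi.smul_apply, smul_eq_mul, add_sub_cancel_left, mul_pow,
      ← Finset.mul_sum, nsq]
    field_simp
  have hY2 : P[Y ^ 2] = a ^ 2 + c ^ 2 * Var[eDot φ; P] := by
    have := variance_eq_sub (memLp_two_const_add_mul_sub hP a c m)
    rw [variance_const_add_mul_sub hP.1, integral_const_add_mul_sub_integral
      (hP.integrable one_le_two)] at this
    linarith
  refine ⟨P.map T, Measure.isProbabilityMeasure_map hT.aemeasurable, ?_,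
    (memLp_map_measure_iff (by fun_prop) hT.aemeasurable).2
      (hXT ▸ memLp_two_const_add_mul_sub hP _ _ _), ?_, ?_⟩
  · have : IsProbabilityMeasure (P.map fun x => (T x, x)) :=
      Measure.isProbabilityMeasure_map (by fun_prop)
    refine (otCost_le_transportCost (π := P.map fun x => (T x, x)) ?_ ?_).trans ?_
    · rw [Measure.map_map measurable_fst (by fun_prop)]; rfl
    · rw [Measure.map_map measurable_snd (by fun_prop)]; exact Measure.map_id
    rw [transportCost, lintegral_map (by fun_prop) (by fun_prop)]
    simp only [hcost]
    rw [← ofReal_integral_eq_lintegral_ofReal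
      ((memLp_two_const_add_mul_sub hP a c m).integrable_sq.div_const nsq)
      (ae_of_all _ fun x => by positivity), integral_div]
    exact ENNReal.ofReal_le_ofReal ((div_le_iff₀ hnsq).2 (hY2 ▸ hac))
  · rw [integral_map hT.aemeasurable (by fun_prop), ← Function.comp_def (eDot φ) T, hXT]
    exact integral_const_add_mul_sub_integral (hP.integrable one_le_two) _ _
  · rw [variance_map (by fun_prop) hT.aemeasurable, hXT, variance_const_add_mul_sub hP.1]

end Transport

section BestCase

variable {n N : ℕ} (s : Fin N → Fin n → ℝ) (φ : Fin n → ℝ)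

lemma integral_eDot_empiricalMeasure :
    (empiricalMeasure s)[eDot φ] = eDot φ (fun j => (N : ℝ)⁻¹ * ∑ i, s i j) := by
  simp only [integral_empiricalMeasure, eDot, Finset.mul_sum]
  rw [Finset.sum_comm]
  exact Finset.sum_congr rfl fun j _ => Finset.sum_congr rfl fun i _ => by ring

variable {s φ}

lemma sq_max_le_variance_of_otCost_le (hN : 0 < N) {δ : ℝ} (hδ : 0 ≤ δ)
    {Q : Measure (Fin n → ℝ)} (hot : otCost Q (empiricalMeasure s) ≤ ENNReal.ofReal δ)
    (hQ : MemLp (eDot φ) 2 Q) :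
    max (√Var[eDot φ; empiricalMeasure s] - √δ * √(∑ j, φ j ^ 2)) 0 ^ 2 ≤ Var[eDot φ; Q] :=
  sq_max_sub_le (variance_nonneg _ _) (sqrt_variance_le_of_otCost_le φ hQ
    (memLp_two_empiricalMeasure s hN (measurable_eDot φ)) hδ hot)

lemma le_innerBest (hN : 0 < N) (hφ : φ ≠ 0) {δ α : ℝ} (hδ : 0 ≤ δ)
    (hα : (α - (empiricalMeasure s)[eDot φ]) ^ 2 ≤ δ * ∑ j, φ j ^ 2) :
    max (√Var[eDot φ; empiricalMeasure s] - √δ * √(∑ j, φ j ^ 2)) 0 ^ 2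
      ≤ innerBest s φ δ α := by
  have := isProbabilityMeasure_empiricalMeasure s hN
  obtain ⟨Q, hQ, hot, hQ2, hmean, -⟩ := exists_otCost_le_mean_variance hφ
    (memLp_two_empiricalMeasure s hN (measurable_eDot φ)) (a := _ - _) (c := 0) (by simpa using hα)
  refine le_csInf ⟨_, Q, hQ, hot, hQ2.integrable one_le_two, hQ2.integrable_sq,
    by rw [hmean]; ring, rfl⟩ ?_
  rintro _ ⟨Q, hQ, hot, h1, h2, rfl, rfl⟩
  rw [integral_sq_sub_sq_eq_variance h1.1 h2]
  exact sq_max_le_variance_of_otCost_le hN hδ hot ((memLp_two_iff_integrable_sq h1.1).2 h2)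

lemma innerBest_integral (hN : 0 < N) (hφ : φ ≠ 0) {δ : ℝ} (hδ : 0 ≤ δ) :
    innerBest s φ δ (empiricalMeasure s)[eDot φ]
      = max (√Var[eDot φ; empiricalMeasure s] - √δ * √(∑ j, φ j ^ 2)) 0 ^ 2 := by
  have := isProbabilityMeasure_empiricalMeasure s hN
  have hP := memLp_two_empiricalMeasure s hN (measurable_eDot φ)
  obtain ⟨c, hc, hcV⟩ := exists_sq_mul_le_sq_and_eq (variance_nonneg (eDot φ) (empiricalMeasure s))
    (by positivity : 0 ≤ √δ * √(∑ j, φ j ^ 2))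
  rw [mul_pow, Real.sq_sqrt hδ, Real.sq_sqrt (by positivity)] at hc
  obtain ⟨Q, hQ, hot, hQ2, hmean, hvar⟩ :=
    exists_otCost_le_mean_variance hφ hP (a := 0) (c := c) (by simpa using hc)
  refine IsLeast.csInf_eq ⟨⟨Q, hQ, hot, hQ2.integrable one_le_two, hQ2.integrable_sq,
    by rw [hmean, add_zero], ?_⟩, ?_⟩
  · rw [add_zero] at hmean
    rw [← hcV, ← hvar, ← hmean, integral_sq_sub_sq_eq_variance hQ2.1 hQ2.integrable_sq]
  rintro _ ⟨Q, hQ, hot, h1, h2, hα, rfl⟩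
  rw [← hα, integral_sq_sub_sq_eq_variance h1.1 h2]
  exact sq_max_le_variance_of_otCost_le hN hδ hot ((memLp_two_iff_integrable_sq h1.1).2 h2)

end BestCase

/-- **Best-case inner and middle problem (Proposition 2.1).**
With empirical mean `s̄`, `μ̄ = φ·s̄ ≥ α₀` and empirical variance `V = φᵀΣφ`,
the minimum over all `α ≥ α₀` with `(α − μ̄)² ≤ δ‖φ‖₂²` of the best-case
portfolio variance `inf{ E^Q[(φ·S)²] − α² : Q ∈ U_δ(Q_N), E^Q[φ·S] = α }`
equals `max(√(φᵀΣφ) − √δ·‖φ‖₂, 0)²`, and the outer minimum is attained at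
`α* = μ̄`. -/
theorem stmt_6 {n N : ℕ} (hN : 0 < N) (s : Fin N → (Fin n → ℝ))
    (φ : Fin n → ℝ) (hφ : φ ≠ 0) (δ : ℝ) (hδ : 0 < δ) (α₀ : ℝ) :
    let sbar : Fin n → ℝ := fun j => (N : ℝ)⁻¹ * ∑ i, s i j
    let μbar : ℝ := eDot φ sbar
    let V : ℝ := (N : ℝ)⁻¹ * ∑ i, (eDot φ (s i) - μbar) ^ 2
    let nsq : ℝ := ∑ i, φ i ^ 2
    α₀ ≤ μbar →
    (sInf { v | ∃ α : ℝ, α₀ ≤ α ∧ (α - μbar) ^ 2 ≤ δ * nsq ∧ v = innerBest s φ δ α }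
        = (max (Real.sqrt V - Real.sqrt δ * Real.sqrt nsq) 0) ^ 2 ∧
      innerBest s φ δ μbar
        = (max (Real.sqrt V - Real.sqrt δ * Real.sqrt nsq) 0) ^ 2) := by
  intro sbar μbar V nsq hα₀
  have hμ : μbar = (empiricalMeasure s)[eDot φ] := (integral_eDot_empiricalMeasure s φ).symm
  have hV : V = Var[eDot φ; empiricalMeasure s] := by
    rw [variance_eq_integral (by fun_prop), integral_empiricalMeasure, ← hμ]
  rw [hμ] at hα₀
  rw [hμ, hV]
  refine ⟨IsLeast.csInf_eq ⟨⟨_, hα₀, by rw [sub_self, sq, zero_mul]; positivity,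
    (innerBest_integral hN hφ hδ.le).symm⟩, ?_⟩, innerBest_integral hN hφ hδ.le⟩
  rintro _ ⟨α, -, hα, rfl⟩
  exact le_innerBest hN hφ hδ.le hα
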